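/- A quasi-metric space (X,d) is Yoneda complete if and only if the partially ordered set BX of formal balls is a dcpo, i.e., every directed subset of BX has a least upper bound. -/

import Mathlib

open scoped ENNReal NNReal

universe u v w

/-- A quasi-metric space structure on `X`: distances valued in `[0,∞]`, with
`d x x = 0`, the triangle inequality, and separatedness. -/
structure QuasiMetric (X : Type u) where
  d : X → X → ℝ≥0∞
  d_self : ∀ x, d x x = 0
  d_triangle : ∀ x y z, d x z ≤ d x y + d y z
  d_separated : ∀ x y, d x y = 0 → d y x = 0 → x = y

namespace QuasiMetric

variable {X : Type u}

/-- The order on formal balls: `(x, r) ⊑ (y, s)` iff `s + d x y ≤ r`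
(equivalently `d x y ≤ r - s`). -/
def ballLE (q : QuasiMetric X) (p p' : X × ℝ≥0) : Prop :=
  (p'.2 : ℝ≥0∞) + q.d p.1 p'.1 ≤ (p.2 : ℝ≥0∞)

/-- `b` is a least upper bound of the set `S` of formal balls. -/
def IsBallLUB (q : QuasiMetric X) (S : Set (X × ℝ≥0)) (b : X × ℝ≥0) : Prop :=
  (∀ p ∈ S, q.ballLE p b) ∧ ∀ c, (∀ p ∈ S, q.ballLE p c) → q.ballLE b c

/-- `le` is a directed preorder (reflexive, transitive, directed). -/
def DirectedPre {D : Type v} (le : D → D → Prop) : Prop :=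
  (∀ i, le i i) ∧ (∀ i j k, le i j → le j k → le i k) ∧ ∀ i j, ∃ k, le i k ∧ le j k

/-- A net `x : D → X` is forward Cauchy: `inf_i sup_{k ≥ j ≥ i} d (x j) (x k) = 0`. -/
def ForwardCauchy (q : QuasiMetric X) {D : Type v} (le : D → D → Prop) (x : D → X) : Prop :=
  (⨅ i, ⨆ j, ⨆ (_ : le i j), ⨆ k, ⨆ (_ : le j k), q.d (x j) (x k)) = 0

/-- `a` is a Yoneda limit of the net `x : D → X`:
for all `y`, `d a y = inf_i sup_{j ≥ i} d (x j) y`. -/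
def IsYonedaLimit (q : QuasiMetric X) {D : Type v} (le : D → D → Prop) (x : D → X) (a : X) :
    Prop :=
  ∀ y, q.d a y = ⨅ i, ⨆ j, ⨆ (_ : le i j), q.d (x j) y

/-- `(X, d)` is Yoneda complete: every forward Cauchy net has a Yoneda limit. -/
def YonedaComplete (q : QuasiMetric X) : Prop :=
  ∀ (D : Type u) (le : D → D → Prop), DirectedPre le → Nonempty D →
    ∀ x : D → X, q.ForwardCauchy le x → ∃ a, q.IsYonedaLimit le x a

/-- `(X, d)` is standard: whenever a directed set of formal balls (viewed as a monotone
net indexed by itself) has a least upper bound, the corresponding forward Cauchy net of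
centers has a Yoneda limit. -/
def Standard (q : QuasiMetric X) : Prop :=
  ∀ S : Set (X × ℝ≥0), S.Nonempty → DirectedOn q.ballLE S →
    (∃ b, q.IsBallLUB S b) →
    ∃ a, q.IsYonedaLimit (fun p p' : ↥S => q.ballLE p.1 p'.1) (fun p : ↥S => p.1.1) a

/-- A weight of `(X, d)`: `φ x ≤ φ y + d x y`. -/
def IsWeight (q : QuasiMetric X) (φ : X → ℝ≥0∞) : Prop :=
  ∀ x y, φ x ≤ φ y + q.d x y

/-- The quasi-metric on weights: `ρ(φ, ψ) = sup_y (ψ y ⊖ φ y)`. -/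
noncomputable def rho {Y : Type v} (φ ψ : Y → ℝ≥0∞) : ℝ≥0∞ := ⨆ y, ψ y - φ y

/-- An ideal of `(X, d)`: a weight `φ` with `inf φ = 0` such that
`ρ(φ, min (λ, μ)) = min (ρ(φ,λ), ρ(φ,μ))` for all weights `λ`, `μ`. -/
def IsIdeal (q : QuasiMetric X) (φ : X → ℝ≥0∞) : Prop :=
  q.IsWeight φ ∧ (⨅ x, φ x) = 0 ∧
    ∀ l m : X → ℝ≥0∞, q.IsWeight l → q.IsWeight m →
      rho φ (fun x => min (l x) (m x)) = min (rho φ l) (rho φ m)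

/-- A weight `φ` is bounded: there are `r < ∞` and `a ∈ X` with `d x a ≤ r + φ x` for all `x`. -/
def BoundedWeight (q : QuasiMetric X) (φ : X → ℝ≥0∞) : Prop :=
  ∃ (r : ℝ≥0) (a : X), ∀ x, q.d x a ≤ (r : ℝ≥0∞) + φ x

/-- `b` is a colimit of the weight `φ`: for all `y`, `d b y = sup_x (d x y ⊖ φ x)`. -/
def IsColimit (q : QuasiMetric X) (φ : X → ℝ≥0∞) (b : X) : Prop :=
  ∀ y, q.d b y = ⨆ x, q.d x y - φ x

/-- The poset of formal balls is a dcpo: every (nonempty) directed subset has a lub. -/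
def BallDcpo (q : QuasiMetric X) : Prop :=
  ∀ S : Set (X × ℝ≥0), S.Nonempty → DirectedOn q.ballLE S → ∃ b, q.IsBallLUB S b

/-- The poset of formal balls is a local dcpo: every (nonempty) directed subset with an
upper bound has a lub. -/
def BallLocalDcpo (q : QuasiMetric X) : Prop :=
  ∀ S : Set (X × ℝ≥0), S.Nonempty → DirectedOn q.ballLE S →
    (∃ c, ∀ p ∈ S, q.ballLE p c) → ∃ b, q.IsBallLUB S b

/-- `u` is way below `v` in the poset of formal balls. -/
def ballWayBelow (q : QuasiMetric X) (u v : X × ℝ≥0) : Prop :=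
  ∀ S : Set (X × ℝ≥0), S.Nonempty → DirectedOn q.ballLE S →
    ∀ s, q.IsBallLUB S s → q.ballLE v s → ∃ p ∈ S, q.ballLE u p

/-- The poset of formal balls is a continuous poset: for every `p`, the set of elements
way below `p` is (nonempty) directed and has `p` as its least upper bound. -/
def BallContinuousPoset (q : QuasiMetric X) : Prop :=
  ∀ p : X × ℝ≥0,
    {u : X × ℝ≥0 | q.ballWayBelow u p}.Nonempty ∧
    DirectedOn q.ballLE {u : X × ℝ≥0 | q.ballWayBelow u p} ∧
    q.IsBallLUB {u : X × ℝ≥0 | q.ballWayBelow u p} p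

/-- A function `χ` is `𝓙`-closed: `ρ(ψ, χ) ≥ χ (colim ψ)` for every bounded ideal `ψ`
possessing a colimit. -/
def JClosed (q : QuasiMetric X) (χ : X → ℝ≥0∞) : Prop :=
  ∀ ψ : X → ℝ≥0∞, q.IsIdeal ψ → q.BoundedWeight ψ → ∀ c, q.IsColimit ψ c → χ c ≤ rho ψ χ

/-- `(X, d)` is a continuous `𝕁`-algebra: every bounded ideal has a colimit, and there is
a map `⇓` assigning to each `x` a bounded ideal `⇓x` with `ρ(⇓x, φ) = d x (colim φ)` for
all `x` and all bounded ideals `φ`. -/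
def ContinuousJAlgebra (q : QuasiMetric X) : Prop :=
  ∃ colim : (X → ℝ≥0∞) → X,
    (∀ φ, q.IsIdeal φ → q.BoundedWeight φ → q.IsColimit φ (colim φ)) ∧
    ∃ w : X → X → ℝ≥0∞,
      (∀ x, q.IsIdeal (w x) ∧ q.BoundedWeight (w x)) ∧
      ∀ (x : X) (φ : X → ℝ≥0∞), q.IsIdeal φ → q.BoundedWeight φ →
        rho (w x) φ = q.d x (colim φ)

/-- The quasi-metric space of all functions `X → [0,∞]` satisfying a predicate `P`
(e.g. the bounded weights, or the bounded ideals), with the quasi-metric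
`ρ(φ, ψ) = sup_x (ψ x ⊖ φ x)`. -/
noncomputable def weightSpace (q : QuasiMetric X) (P : (X → ℝ≥0∞) → Prop) :
    QuasiMetric {φ : X → ℝ≥0∞ // P φ} where
  d φ ψ := rho φ.1 ψ.1
  d_self φ := by simp [rho]
  d_triangle φ ψ χ := by
    refine iSup_le fun x => ?_
    calc χ.1 x - φ.1 x ≤ (χ.1 x - ψ.1 x) + (ψ.1 x - φ.1 x) := tsub_le_tsub_add_tsub
    _ ≤ rho ψ.1 χ.1 + rho φ.1 ψ.1 :=
        add_le_add (le_iSup (fun y => χ.1 y - ψ.1 y) x) (le_iSup (fun y => ψ.1 y - φ.1 y) x)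
    _ = rho φ.1 ψ.1 + rho ψ.1 χ.1 := add_comm _ _
  d_separated φ ψ h1 h2 := by
    apply Subtype.ext
    funext x
    have hx1 : ψ.1 x - φ.1 x ≤ 0 := by
      rw [← h1]; exact le_iSup (fun y => ψ.1 y - φ.1 y) x
    have hx2 : φ.1 x - ψ.1 x ≤ 0 := by
      rw [← h2]; exact le_iSup (fun y => φ.1 y - ψ.1 y) x
    exact le_antisymm (tsub_eq_zero_iff_le.mp (le_antisymm hx2 zero_le))
      (tsub_eq_zero_iff_le.mp (le_antisymm hx1 zero_le))

end QuasiMetric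

/-!
A directed set `S` of formal balls, indexed by itself, is a net whose centres satisfy
`d (x j) (x k) ≤ r j - r k`, so it is forward Cauchy; if `a` is its Yoneda limit, then
`(a, inf r)` is the supremum of `S`.

Conversely, let `s i = sup_{k ≥ j ≥ i} d (x j) (x k)` for a forward Cauchy net `x`. For every
`c ≥ 0` the balls `(x j, r)` with `s j + c < r` form a directed set, whose upper bounds `(z, t)`
are exactly those with `t + d (x j) z ≤ s j + c` for all `j`. The supremum `b` for `c = 0` has
radius `0`, and its centre is the Yoneda limit: if `d (x j) y ≤ c` on a tail, then `(y, 0)` bounds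
the balls for `c`, whose supremum has radius `c` and a centre at distance `0` from `b`.
-/

namespace QuasiMetric

variable {X : Type u} (q : QuasiMetric X)

section FormalBalls

variable {p p' p'' : X × ℝ≥0}

lemma ballLE_refl (p : X × ℝ≥0) : q.ballLE p p := by
  simp [ballLE, q.d_self]

lemma ballLE_trans (h : q.ballLE p p') (h' : q.ballLE p' p'') : q.ballLE p p'' :=
  calc (p''.2 : ℝ≥0∞) + q.d p.1 p''.1
      ≤ ((p''.2 : ℝ≥0∞) + q.d p'.1 p''.1) + q.d p.1 p'.1 := by
        rw [add_assoc, add_comm (q.d p'.1 p''.1)]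
        gcongr
        exact q.d_triangle _ _ _
    _ ≤ (p'.2 : ℝ≥0∞) + q.d p.1 p'.1 := by gcongr; exact h'
    _ ≤ p.2 := h

lemma radius_le_of_ballLE (h : q.ballLE p p') : (p'.2 : ℝ≥0∞) ≤ p.2 :=
  le_self_add.trans h

lemma d_le_sub_of_ballLE (h : q.ballLE p p') : q.d p.1 p'.1 ≤ p.2 - p'.2 :=
  ENNReal.le_sub_of_add_le_left ENNReal.coe_ne_top h

end FormalBalls

section DirectedBalls

variable {S : Set (X × ℝ≥0)}

lemma directedPre_ballLE (hS : DirectedOn q.ballLE S) :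
    DirectedPre (fun p p' : S => q.ballLE p.1 p'.1) := by
  refine ⟨fun p => q.ballLE_refl p.1, fun _ _ _ => q.ballLE_trans, fun p p' => ?_⟩
  obtain ⟨z, hz, hpz, hp'z⟩ := hS p.1 p.2 p'.1 p'.2
  exact ⟨⟨z, hz⟩, hpz, hp'z⟩

lemma forwardCauchy_centers (hne : S.Nonempty) :
    q.ForwardCauchy (fun p p' : S => q.ballLE p.1 p'.1) (fun p : S => p.1.1) := by
  have : Nonempty S := hne.to_subtype
  set ρ : ℝ≥0∞ := ⨅ p : S, (p.1.2 : ℝ≥0∞)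
  have hρ : ρ ≠ ⊤ :=
    ((iInf_le (fun p : S => (p.1.2 : ℝ≥0∞)) ⟨hne.some, hne.some_mem⟩).trans_lt
      ENNReal.coe_lt_top).ne
  have hgap : ⨅ i : S, ((i.1.2 : ℝ≥0∞) - ρ) = 0 := by
    refine le_antisymm ((ENNReal.add_le_add_iff_right hρ).1 ?_) zero_le
    rw [ENNReal.iInf_add, zero_add]
    refine le_iInf fun i => (iInf_le _ i).trans ?_
    exact (tsub_add_cancel_of_le (iInf_le (fun p : S => (p.1.2 : ℝ≥0∞)) i)).le
  refine le_antisymm ((iInf_mono fun i => ?_).trans hgap.le) zero_le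
  refine iSup₂_le fun j hij => iSup₂_le fun k hjk => ?_
  exact (q.d_le_sub_of_ballLE hjk).trans
    (tsub_le_tsub (q.radius_le_of_ballLE hij) (iInf_le _ k))

lemma isBallLUB_of_isYonedaLimit (hne : S.Nonempty) (hS : DirectedOn q.ballLE S) {a : X}
    (ha : q.IsYonedaLimit (fun p p' : S => q.ballLE p.1 p'.1) (fun p : S => p.1.1) a) :
    q.IsBallLUB S (a, ⨅ p : S, p.1.2) := by
  have : Nonempty S := hne.to_subtype
  obtain ⟨-, -, hdir⟩ := q.directedPre_ballLE hS
  show (∀ p ∈ S, _ + _ ≤ _) ∧ ∀ c, _ → _ + _ ≤ _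
  simp only [ENNReal.coe_iInf]
  refine ⟨fun p hp => ?_, fun c hc => le_iInf fun p => ?_⟩
  · have haa := ha a
    rw [q.d_self, eq_comm] at haa
    calc (⨅ z : S, (z.1.2 : ℝ≥0∞)) + q.d p.1 a
        ≤ ⨅ i : S, ((p.2 : ℝ≥0∞) + ⨆ (j : S) (_ : q.ballLE i.1 j.1), q.d j.1.1 a) := by
          refine le_iInf fun i => ?_
          obtain ⟨z, hpz, hiz⟩ := hdir ⟨p, hp⟩ i
          calc (⨅ z : S, (z.1.2 : ℝ≥0∞)) + q.d p.1 a
              ≤ z.1.2 + (q.d p.1 z.1.1 + q.d z.1.1 a) :=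
                add_le_add (iInf_le _ z) (q.d_triangle _ _ _)
            _ = (z.1.2 + q.d p.1 z.1.1) + q.d z.1.1 a := (add_assoc _ _ _).symm
            _ ≤ _ := add_le_add hpz
                (le_iSup₂ (f := fun (j : S) (_ : q.ballLE i.1 j.1) => q.d j.1.1 a) z hiz)
      _ = p.2 := by rw [← ENNReal.add_iInf, haa, add_zero]
  · have hca : q.d a c.1 ≤ p.1.2 - c.2 := by
      rw [ha c.1]
      refine (iInf_le _ p).trans (iSup₂_le fun j hpj => ?_)
      exact ENNReal.le_sub_of_add_le_left ENNReal.coe_ne_top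
        ((hc j.1 j.2).trans (q.radius_le_of_ballLE hpj))
    calc (c.2 : ℝ≥0∞) + q.d a c.1 ≤ c.2 + (p.1.2 - c.2) := by gcongr
      _ = p.1.2 := add_tsub_cancel_of_le (q.radius_le_of_ballLE (hc p.1 p.2))

end DirectedBalls

section CauchyNet

variable {D : Type v} {le : D → D → Prop} (x : D → X)

noncomputable def forwardDiam (le : D → D → Prop) (x : D → X) (i : D) : ℝ≥0∞ :=
  ⨆ j, ⨆ (_ : le i j), ⨆ k, ⨆ (_ : le j k), q.d (x j) (x k)

lemma iInf_forwardDiam (hx : q.ForwardCauchy le x) : ⨅ i, q.forwardDiam le x i = 0 := hx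

lemma d_le_forwardDiam {i j k : D} (hij : le i j) (hjk : le j k) :
    q.d (x j) (x k) ≤ q.forwardDiam le x i :=
  le_iSup₂_of_le j hij <|
    le_iSup₂_of_le (f := fun k (_ : le j k) => q.d (x j) (x k)) k hjk le_rfl

lemma forwardDiam_anti (htrans : ∀ i j k, le i j → le j k → le i k) {i i' : D} (h : le i i') :
    q.forwardDiam le x i' ≤ q.forwardDiam le x i :=
  iSup₂_le fun _ hj => iSup₂_le fun _ hk => q.d_le_forwardDiam x (htrans _ _ _ h hj) hk

lemma exists_forwardDiam_lt (hle : DirectedPre le) (hx : q.ForwardCauchy le x) {ε : ℝ≥0∞}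
    (hε : 0 < ε) (i j : D) : ∃ l, le i l ∧ le j l ∧ q.forwardDiam le x l < ε := by
  obtain ⟨-, htrans, hdir⟩ := hle
  rw [← q.iInf_forwardDiam x hx] at hε
  obtain ⟨m, hm⟩ := iInf_lt_iff.1 hε
  obtain ⟨l₁, hil₁, hjl₁⟩ := hdir i j
  obtain ⟨l, hl₁l, hml⟩ := hdir l₁ m
  exact ⟨l, htrans _ _ _ hil₁ hl₁l, htrans _ _ _ hjl₁ hl₁l,
    (q.forwardDiam_anti x htrans hml).trans_lt hm⟩

lemma d_le_forwardDiam_add_of_tail (hle : DirectedPre le) {i₀ : D} {y : X} {c : ℝ≥0∞}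
    (hy : ∀ j, le i₀ j → q.d (x j) y ≤ c) (j : D) :
    q.d (x j) y ≤ q.forwardDiam le x j + c := by
  obtain ⟨hrefl, -, hdir⟩ := hle
  obtain ⟨l, hjl, hi₀l⟩ := hdir j i₀
  calc q.d (x j) y ≤ q.d (x j) (x l) + q.d (x l) y := q.d_triangle _ _ _
    _ ≤ q.forwardDiam le x j + c := add_le_add (q.d_le_forwardDiam x (hrefl j) hjl) (hy l hi₀l)

def netBalls (le : D → D → Prop) (x : D → X) (c : ℝ≥0) : Set (X × ℝ≥0) :=
  {p | ∃ j, p.1 = x j ∧ q.forwardDiam le x j + c < p.2}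

lemma netBalls_nonempty (hx : q.ForwardCauchy le x) (c : ℝ≥0) :
    (q.netBalls le x c).Nonempty := by
  have h1 : ⨅ i, q.forwardDiam le x i < 1 := by rw [q.iInf_forwardDiam x hx]; exact one_pos
  obtain ⟨j, hj⟩ := iInf_lt_iff.1 h1
  refine ⟨(x j, 1 + c), j, rfl, ?_⟩
  push_cast
  exact ENNReal.add_lt_add_right ENNReal.coe_ne_top hj

lemma directedOn_netBalls (hle : DirectedPre le) (hx : q.ForwardCauchy le x) (c : ℝ≥0) :
    DirectedOn q.ballLE (q.netBalls le x c) := by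
  rintro ⟨-, t⟩ ⟨j, rfl, hj⟩ ⟨-, t'⟩ ⟨k, rfl, hk⟩
  obtain ⟨r, hcr, hr⟩ := ENNReal.lt_iff_exists_nnreal_btwn.1
    (lt_min (lt_tsub_iff_left.2 hj) (lt_tsub_iff_left.2 hk))
  obtain ⟨l, hjl, hkl, hl⟩ := q.exists_forwardDiam_lt x hle hx (tsub_pos_of_lt hcr) j k
  have hball : ∀ {i : D} {t : ℝ≥0}, le i l → (r : ℝ≥0∞) < t - q.forwardDiam le x i →
      q.ballLE (x i, t) (x l, r) := fun {i t} hil hr =>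
    calc (r : ℝ≥0∞) + q.d (x i) (x l) ≤ r + q.forwardDiam le x i := by
          gcongr; exact q.d_le_forwardDiam x (hle.1 i) hil
      _ ≤ t := (lt_tsub_iff_right.1 hr).le
  exact ⟨(x l, r), ⟨l, rfl, lt_tsub_iff_right.1 hl⟩,
    hball hjl (hr.trans_le (min_le_left _ _)), hball hkl (hr.trans_le (min_le_right _ _))⟩

lemma ballLE_netBalls_iff {c : ℝ≥0} {u : X × ℝ≥0} :
    (∀ p ∈ q.netBalls le x c, q.ballLE p u) ↔
      ∀ j, (u.2 : ℝ≥0∞) + q.d (x j) u.1 ≤ q.forwardDiam le x j + c := by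
  refine ⟨fun hu j => le_of_forall_gt_imp_ge_of_dense fun a ha => ?_, ?_⟩
  · obtain ⟨r, hr, hra⟩ := ENNReal.lt_iff_exists_nnreal_btwn.1 ha
    exact (hu (x j, r) ⟨j, rfl, hr⟩).trans hra.le
  · rintro hu ⟨-, r⟩ ⟨j, rfl, hj⟩
    exact (hu j).trans hj.le

lemma radius_le_of_ballLE_netBalls (hx : q.ForwardCauchy le x) {c : ℝ≥0} {u : X × ℝ≥0}
    (hu : ∀ p ∈ q.netBalls le x c, q.ballLE p u) : (u.2 : ℝ≥0∞) ≤ c := by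
  rw [q.ballLE_netBalls_iff] at hu
  calc (u.2 : ℝ≥0∞) ≤ ⨅ j, (q.forwardDiam le x j + c) :=
        le_iInf fun j => le_self_add.trans (hu j)
    _ = c := by rw [← ENNReal.iInf_add, q.iInf_forwardDiam x hx, zero_add]

lemma d_le_forwardDiam_of_ballLE_netBalls {c : ℝ≥0} {u : X × ℝ≥0}
    (hu : ∀ p ∈ q.netBalls le x c, q.ballLE p u) (hcu : c ≤ u.2) (j : D) :
    q.d (x j) u.1 ≤ q.forwardDiam le x j := by
  rw [q.ballLE_netBalls_iff] at hu
  refine (ENNReal.add_le_add_iff_left (ENNReal.coe_ne_top (r := c))).1 ?_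
  calc (c : ℝ≥0∞) + q.d (x j) u.1 ≤ u.2 + q.d (x j) u.1 := by gcongr
    _ ≤ q.forwardDiam le x j + c := hu j
    _ = c + q.forwardDiam le x j := add_comm _ _

lemma isBallLUB_netBalls_shift (hx : q.ForwardCauchy le x) {c : ℝ≥0} {b b' : X × ℝ≥0}
    (hb : q.IsBallLUB (q.netBalls le x 0) b) (hb' : q.IsBallLUB (q.netBalls le x c) b') :
    q.d b.1 b'.1 = 0 ∧ (b'.2 : ℝ≥0∞) = c := by
  have hbx := q.d_le_forwardDiam_of_ballLE_netBalls x hb.1 zero_le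
  have hbc : q.ballLE b' (b.1, c) := hb'.2 _ <| (q.ballLE_netBalls_iff x).2 fun j => by
    rw [add_comm]
    exact add_le_add_left (hbx j) _
  have hb'c : (b'.2 : ℝ≥0∞) = c :=
    le_antisymm (q.radius_le_of_ballLE_netBalls x hx hb'.1) (le_self_add.trans hbc)
  have hb'x := q.d_le_forwardDiam_of_ballLE_netBalls x hb'.1 (by exact_mod_cast hb'c.ge)
  have hbb' : q.ballLE b (b'.1, 0) :=
    hb.2 _ <| (q.ballLE_netBalls_iff x).2 fun j => by simpa using hb'x j
  have hb0 : (b.2 : ℝ≥0∞) = 0 :=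
    le_antisymm (q.radius_le_of_ballLE_netBalls x hx hb.1) zero_le
  refine ⟨le_antisymm ?_ zero_le, hb'c⟩
  simpa [ballLE, hb0] using hbb'

lemma isYonedaLimit_of_isBallLUB_netBalls (hle : DirectedPre le) (hx : q.ForwardCauchy le x)
    (hB : q.BallDcpo) {b : X × ℝ≥0} (hb : q.IsBallLUB (q.netBalls le x 0) b) :
    q.IsYonedaLimit le x b.1 := by
  intro y
  refine le_antisymm (le_of_forall_gt_imp_ge_of_dense fun a ha => ?_) ?_
  · obtain ⟨c, hc, hca⟩ := ENNReal.lt_iff_exists_nnreal_btwn.1 ha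
    obtain ⟨i₀, hi₀⟩ := iInf_lt_iff.1 hc
    obtain ⟨b', hb'⟩ :=
      hB _ (q.netBalls_nonempty x hx c) (q.directedOn_netBalls x hle hx c)
    obtain ⟨hbb', hb'c⟩ := q.isBallLUB_netBalls_shift x hx hb hb'
    have hyc : ∀ j, le i₀ j → q.d (x j) y ≤ c := fun j hj =>
      (le_iSup₂ (f := fun j (_ : le i₀ j) => q.d (x j) y) j hj).trans hi₀.le
    have hb'y : q.ballLE b' (y, 0) := hb'.2 _ <| (q.ballLE_netBalls_iff x).2 fun j => by
      simpa using q.d_le_forwardDiam_add_of_tail x hle hyc j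
    calc q.d b.1 y ≤ q.d b.1 b'.1 + q.d b'.1 y := q.d_triangle _ _ _
      _ ≤ c := by simpa [ballLE, hbb', hb'c] using hb'y
      _ ≤ a := hca.le
  · have hbx := q.d_le_forwardDiam_of_ballLE_netBalls x hb.1 zero_le
    calc ⨅ i, ⨆ j, ⨆ (_ : le i j), q.d (x j) y
        ≤ ⨅ i, (q.forwardDiam le x i + q.d b.1 y) :=
          iInf_mono fun i => iSup₂_le fun j hij => (q.d_triangle _ b.1 _).trans
            (add_le_add_left ((hbx j).trans (q.forwardDiam_anti x hle.2.1 hij)) _)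
      _ = q.d b.1 y := by rw [← ENNReal.iInf_add, q.iInf_forwardDiam x hx, zero_add]

end CauchyNet

end QuasiMetric

open QuasiMetric in
/-- `(X, d)` is Yoneda complete iff the poset `BX` of formal balls is a
dcpo, i.e., every directed subset of `BX` has a least upper bound. -/
theorem stmt4 {X : Type u} (q : QuasiMetric X) : q.YonedaComplete ↔ q.BallDcpo := by
  constructor
  · intro hY S hne hS
    obtain ⟨a, ha⟩ := hY S _ (q.directedPre_ballLE hS) hne.to_subtype _
      (q.forwardCauchy_centers hne)
    exact ⟨_, q.isBallLUB_of_isYonedaLimit hne hS ha⟩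
  · intro hB D le hle _ x hx
    obtain ⟨b, hb⟩ := hB _ (q.netBalls_nonempty x hx 0) (q.directedOn_netBalls x hle hx 0)
    exact ⟨b.1, q.isYonedaLimit_of_isBallLUB_netBalls x hle hx hB hb⟩
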